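/- arXiv:1105.1458 — 4 statements merged into one kernel-verified Lean document; each statement's English description precedes it below -/
import Mathlib

section
/- If p is a smooth function satisfying the advected wave equation ∂²p/∂t² + 2u₀ ∂²p/∂x∂t + u₀² ∂²p/∂x² − c₀²(∂²p/∂x² + ∂²p/∂y²) = 0, and p'(x', y', t') = p(x, y, t) under the Lorentz transform x' = x/√(1−M₀²), y' = y, t' = t + M₀ x/(c₀(1−M₀²)), then p' satisfies the standard wave equation with modified celerity: ∂²p'/∂t'² − c₀²(1−M₀²)(∂²p'/∂x'² + ∂²p'/∂y'²) = 0. -/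
/-! With κ = (1 - M₀²)^(-1/2) and m = M₀ / (c₀ (1 - M₀²)) the substitution is linear:
p = p' ∘ L for L(x, y, t) = (κ x, y, t + m x). Hence the Hessian of p at v is the Hessian of p'
at L v evaluated on the vectors L e₁ = (κ, 0, m), L e₂ = e₂, L e₃ = e₃, and the advected wave
operator applied to p becomes a quadratic expression in the symmetric Hessian of p'. The choice
of m makes the mixed x-t term vanish, and what remains is (1 - M₀²)⁻¹ times the standard wave
operator with celerity c₀ √(1 - M₀²). -/

noncomputable def pdx (f : ℝ → ℝ → ℝ → ℝ) (x y t : ℝ) : ℝ := deriv (fun s => f s y t) x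
noncomputable def pdy (f : ℝ → ℝ → ℝ → ℝ) (x y t : ℝ) : ℝ := deriv (fun s => f x s t) y
noncomputable def pdt (f : ℝ → ℝ → ℝ → ℝ) (x y t : ℝ) : ℝ := deriv (fun s => f x y s) t

def uncurry₃ (f : ℝ → ℝ → ℝ → ℝ) (v : ℝ × ℝ × ℝ) : ℝ := f v.1 v.2.1 v.2.2

section Hessian

variable {E F : Type*} [NormedAddCommGroup E] [NormedSpace ℝ E]
  [NormedAddCommGroup F] [NormedSpace ℝ F] {G : E → F}

theorem ContDiff.differentiable_fderiv_apply (hG : ContDiff ℝ 2 G) (b : E) :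
    Differentiable ℝ (fun w => fderiv ℝ G w b) :=
  ((hG.fderiv_right (m := 1) (by norm_num)).differentiable one_ne_zero).clm_apply
    (differentiable_const b)

theorem ContDiff.fderiv_fderiv_apply (hG : ContDiff ℝ 2 G) (v a b : E) :
    fderiv ℝ (fun w => fderiv ℝ G w b) v a = fderiv ℝ (fderiv ℝ G) v a b := by
  rw [fderiv_clm_apply (((hG.fderiv_right (m := 1) (by norm_num)).differentiable one_ne_zero) v)
    (differentiableAt_const b)]
  simp

theorem ContDiff.fderiv_fderiv_comp_continuousLinearMap {H : Type*} [NormedAddCommGroup H]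
    [NormedSpace ℝ H] {G : E → H} (hG : ContDiff ℝ 2 G) (L : F →L[ℝ] E) (v a b : F) :
    fderiv ℝ (fderiv ℝ (G ∘ L)) v a b = fderiv ℝ (fderiv ℝ G) (L v) (L a) (L b) := by
  have h := congrArg (fun T => T ![a, b]) (L.iteratedFDeriv_comp_right hG v le_rfl)
  simpa only [iteratedFDeriv_two_apply, ContinuousMultilinearMap.compContinuousLinearMap_apply,
    Matrix.cons_val_zero, Matrix.cons_val_one, Matrix.cons_val_fin_one] using h

end Hessian

section Partials

variable {f : ℝ → ℝ → ℝ → ℝ}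

theorem pdx_eq_fderiv (hf : Differentiable ℝ (uncurry₃ f)) :
    pdx f = fun x y t => fderiv ℝ (uncurry₃ f) (x, y, t) (1, 0, 0) :=
  funext₃ fun x y t => ((hf _).hasFDerivAt.comp_hasDerivAt (f := fun s : ℝ => (s, y, t)) x
    ((hasDerivAt_id' x).prodMk ((hasDerivAt_const x y).prodMk (hasDerivAt_const x t)))).deriv

theorem pdy_eq_fderiv (hf : Differentiable ℝ (uncurry₃ f)) :
    pdy f = fun x y t => fderiv ℝ (uncurry₃ f) (x, y, t) (0, 1, 0) :=
  funext₃ fun x y t => ((hf _).hasFDerivAt.comp_hasDerivAt (f := fun s : ℝ => (x, s, t)) y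
    ((hasDerivAt_const y x).prodMk ((hasDerivAt_id' y).prodMk (hasDerivAt_const y t)))).deriv

theorem pdt_eq_fderiv (hf : Differentiable ℝ (uncurry₃ f)) :
    pdt f = fun x y t => fderiv ℝ (uncurry₃ f) (x, y, t) (0, 0, 1) :=
  funext₃ fun x y t => ((hf _).hasFDerivAt.comp_hasDerivAt (f := fun s : ℝ => (x, y, s)) t
    ((hasDerivAt_const t x).prodMk ((hasDerivAt_const t y).prodMk (hasDerivAt_id' t)))).deriv

theorem pdx_pdx_eq (hf : ContDiff ℝ 2 (uncurry₃ f)) (x y t : ℝ) :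
    pdx (pdx f) x y t = fderiv ℝ (fderiv ℝ (uncurry₃ f)) (x, y, t) (1, 0, 0) (1, 0, 0) := by
  rw [pdx_eq_fderiv (hf.differentiable two_ne_zero),
    pdx_eq_fderiv (hf.differentiable_fderiv_apply _)]
  exact hf.fderiv_fderiv_apply _ _ _

theorem pdy_pdy_eq (hf : ContDiff ℝ 2 (uncurry₃ f)) (x y t : ℝ) :
    pdy (pdy f) x y t = fderiv ℝ (fderiv ℝ (uncurry₃ f)) (x, y, t) (0, 1, 0) (0, 1, 0) := by
  rw [pdy_eq_fderiv (hf.differentiable two_ne_zero),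
    pdy_eq_fderiv (hf.differentiable_fderiv_apply _)]
  exact hf.fderiv_fderiv_apply _ _ _

theorem pdt_pdt_eq (hf : ContDiff ℝ 2 (uncurry₃ f)) (x y t : ℝ) :
    pdt (pdt f) x y t = fderiv ℝ (fderiv ℝ (uncurry₃ f)) (x, y, t) (0, 0, 1) (0, 0, 1) := by
  rw [pdt_eq_fderiv (hf.differentiable two_ne_zero),
    pdt_eq_fderiv (hf.differentiable_fderiv_apply _)]
  exact hf.fderiv_fderiv_apply _ _ _

theorem pdx_pdt_eq (hf : ContDiff ℝ 2 (uncurry₃ f)) (x y t : ℝ) :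
    pdx (pdt f) x y t = fderiv ℝ (fderiv ℝ (uncurry₃ f)) (x, y, t) (1, 0, 0) (0, 0, 1) := by
  rw [pdt_eq_fderiv (hf.differentiable two_ne_zero),
    pdx_eq_fderiv (hf.differentiable_fderiv_apply _)]
  exact hf.fderiv_fderiv_apply _ _ _

end Partials

noncomputable def lorentzMap (κ m : ℝ) : ℝ × ℝ × ℝ →L[ℝ] ℝ × ℝ × ℝ :=
  LinearMap.toContinuousLinearMap
    { toFun := fun v => (κ * v.1, v.2.1, v.2.2 + m * v.1)
      map_add' := fun v w => by ext <;> simp only [Prod.fst_add, Prod.snd_add] <;> ring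
      map_smul' := fun a v => by
        ext <;> simp only [Prod.smul_fst, Prod.smul_snd, smul_eq_mul, RingHom.id_apply] <;> ring }

@[simp]
theorem lorentzMap_apply (κ m : ℝ) (v : ℝ × ℝ × ℝ) :
    lorentzMap κ m v = (κ * v.1, v.2.1, v.2.2 + m * v.1) := rfl

theorem lorentzMap_surjective {κ : ℝ} (hκ : κ ≠ 0) (m : ℝ) :
    Function.Surjective (lorentzMap κ m) :=
  fun v => ⟨(κ⁻¹ * v.1, v.2.1, v.2.2 - m * (κ⁻¹ * v.1)), by ext <;> simp [hκ]⟩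

theorem hessian_standard_wave_of_advected {H : ℝ × ℝ × ℝ →L[ℝ] ℝ × ℝ × ℝ →L[ℝ] ℝ}
    (hH : ∀ a b, H a b = H b a) {c M κ m : ℝ} (hκ : κ ^ 2 * (1 - M ^ 2) = 1)
    (hm : m * c * (1 - M ^ 2) = M)
    (hw : H (0, 0, 1) (0, 0, 1) + 2 * (M * c) * H (κ, 0, m) (0, 0, 1)
      + (M * c) ^ 2 * H (κ, 0, m) (κ, 0, m)
      - c ^ 2 * (H (κ, 0, m) (κ, 0, m) + H (0, 1, 0) (0, 1, 0)) = 0) :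
    H (0, 0, 1) (0, 0, 1) - c ^ 2 * (1 - M ^ 2) * (H (1, 0, 0) (1, 0, 0) + H (0, 1, 0) (0, 1, 0))
      = 0 := by
  have hv : ((κ, 0, m) : ℝ × ℝ × ℝ) = κ • (1, 0, 0) + m • (0, 0, 1) := by simp
  rw [hv] at hw
  simp only [map_add, map_smul, add_apply, smul_apply, smul_eq_mul, hH (0, 0, 1) (1, 0, 0)] at hw
  set A := H (1, 0, 0) (1, 0, 0)
  set B := H (1, 0, 0) (0, 0, 1)
  set C := H (0, 0, 1) (0, 0, 1)
  linear_combination (1 - M ^ 2) * hw + c ^ 2 * A * (1 - M ^ 2) * hκ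
    + (2 * c * κ * B * (1 - M ^ 2) + (1 - M ^ 2) * C * c * m - C * M) * hm

theorem lorentz_transform_wave_equation_general (c₀ u₀ M₀ : ℝ)
    (hc : 0 < c₀) (huc : |u₀| < c₀) (hM : M₀ = u₀ / c₀)
    (p p' : ℝ → ℝ → ℝ → ℝ)
    (hp' : ContDiff ℝ 2 (fun v : ℝ × ℝ × ℝ => p' v.1 v.2.1 v.2.2))
    (hrel : ∀ x y t : ℝ,
      p' (x / Real.sqrt (1 - M₀ ^ 2)) y (t + M₀ * x / (c₀ * (1 - M₀ ^ 2))) = p x y t)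
    (hwave : ∀ x y t : ℝ,
      pdt (pdt p) x y t + 2 * u₀ * pdx (pdt p) x y t + u₀ ^ 2 * pdx (pdx p) x y t
        - c₀ ^ 2 * (pdx (pdx p) x y t + pdy (pdy p) x y t) = 0) :
    ∀ x' y' t' : ℝ,
      pdt (pdt p') x' y' t'
        - c₀ ^ 2 * (1 - M₀ ^ 2) * (pdx (pdx p') x' y' t' + pdy (pdy p') x' y' t') = 0 := by
  intro x' y' t'
  have hu : u₀ = M₀ * c₀ := by rw [hM, div_mul_cancel₀ _ hc.ne']
  have hM2 : 0 < 1 - M₀ ^ 2 := by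
    rw [sub_pos, sq_lt_one_iff_abs_lt_one, hM, abs_div, abs_of_pos hc]
    exact (div_lt_one hc).2 huc
  set κ := (√(1 - M₀ ^ 2))⁻¹
  set m := M₀ / (c₀ * (1 - M₀ ^ 2))
  have hκ : κ ^ 2 * (1 - M₀ ^ 2) = 1 := by simp [κ, inv_pow, Real.sq_sqrt hM2.le, hM2.ne']
  have hm : m * c₀ * (1 - M₀ ^ 2) = M₀ := by
    simp only [m]
    field_simp
  replace hp' : ContDiff ℝ 2 (uncurry₃ p') := hp'
  have hpL : uncurry₃ p = uncurry₃ p' ∘ lorentzMap κ m := funext fun v => by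
    rw [Function.comp_apply, lorentzMap_apply, uncurry₃, uncurry₃, ← hrel, div_eq_inv_mul v.1,
      ← div_mul_eq_mul_div]
  have hp : ContDiff ℝ 2 (uncurry₃ p) := hpL ▸ hp'.comp (lorentzMap κ m).contDiff
  obtain ⟨⟨x, y, t⟩, hxyt⟩ := lorentzMap_surjective (κ := κ) (by positivity) m (x', y', t')
  have hw := hwave x y t
  rw [pdt_pdt_eq hp, pdx_pdt_eq hp, pdx_pdx_eq hp, pdy_pdy_eq hp, hpL] at hw
  simp only [hp'.fderiv_fderiv_comp_continuousLinearMap, hxyt, lorentzMap_apply, mul_one,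
    mul_zero, add_zero, zero_add] at hw
  rw [pdt_pdt_eq hp', pdx_pdx_eq hp', pdy_pdy_eq hp']
  exact hessian_standard_wave_of_advected (hp'.contDiffAt.isSymmSndFDerivAt (by simp)) hκ hm
    (hu ▸ hw)

theorem lorentz_transform_wave_equation (c₀ u₀ M₀ : ℝ)
    (hc : 0 < c₀) (huc : |u₀| < c₀) (hM : M₀ = u₀ / c₀)
    (p p' : ℝ → ℝ → ℝ → ℝ)
    (hp : ContDiff ℝ 2 (fun v : ℝ × ℝ × ℝ => p v.1 v.2.1 v.2.2))
    (hp' : ContDiff ℝ 2 (fun v : ℝ × ℝ × ℝ => p' v.1 v.2.1 v.2.2))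
    (hrel : ∀ x y t : ℝ,
      p' (x / Real.sqrt (1 - M₀ ^ 2)) y (t + M₀ * x / (c₀ * (1 - M₀ ^ 2))) = p x y t)
    (hwave : ∀ x y t : ℝ,
      pdt (pdt p) x y t + 2 * u₀ * pdx (pdt p) x y t + u₀ ^ 2 * pdx (pdx p) x y t
        - c₀ ^ 2 * (pdx (pdx p) x y t + pdy (pdy p) x y t) = 0) :
    ∀ x' y' t' : ℝ,
      pdt (pdt p') x' y' t'
        - c₀ ^ 2 * (1 - M₀ ^ 2) * (pdx (pdx p') x' y' t' + pdy (pdy p') x' y' t') = 0 :=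
  lorentz_transform_wave_equation_general c₀ u₀ M₀ hc huc hM p p' hp' hrel hwave
end

section
/- The principal symbol matrix M = [[0,0,ik_x c₀²,0],[0,0,0,ik_y c₀²],[ik_x,ik_x,0,0],[ik_y,ik_y,0,0]] of the Berenger-type absorbing layer system has eigenvalue 0 with algebraic multiplicity 2 but geometric multiplicity 1 (eigenspace spanned by (−1,1,0,0)ᵗ), whenever k_x ≠ 0 and k_y ≠ 0. -/
open Complex Polynomial

theorem principal_symbol_multiplicities (c₀ kx ky : ℝ) (hc : 0 < c₀)
    (hkx : kx ≠ 0) (hky : ky ≠ 0)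
    (M : Matrix (Fin 4) (Fin 4) ℂ)
    (hM : M = !![0, 0, I * kx * c₀ ^ 2, 0;
                 0, 0, 0, I * ky * c₀ ^ 2;
                 I * kx, I * kx, 0, 0;
                 I * ky, I * ky, 0, 0]) :
    M.charpoly.rootMultiplicity 0 = 2 ∧
    LinearMap.ker M.mulVecLin = Submodule.span ℂ {![-1, 1, 0, 0]} := by
  subst hM
  have hkx' : (kx : ℂ) ≠ 0 := by exact_mod_cast hkx
  have hky' : (ky : ℂ) ≠ 0 := by exact_mod_cast hky
  have hc0 : c₀ ≠ 0 := hc.ne'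
  have hc' : (c₀ : ℂ) ≠ 0 := by exact_mod_cast hc.ne'
  have hs : (((kx:ℂ)^2 + (ky:ℂ)^2) * (c₀:ℂ)^2) ≠ 0 := by
    have h1 : (kx:ℂ)^2 + (ky:ℂ)^2 ≠ 0 := by
      have : ((kx^2 + ky^2 : ℝ) : ℂ) ≠ 0 := by
        exact_mod_cast (by positivity : (0:ℝ) < kx^2 + ky^2).ne'
      push_cast at this
      exact this
    exact mul_ne_zero h1 (pow_ne_zero _ hc')
  constructor
  · -- charpoly computation
    have hcp : (!![0, 0, I * kx * c₀ ^ 2, 0;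
        0, 0, 0, I * ky * c₀ ^ 2;
        I * kx, I * kx, 0, 0;
        I * ky, I * ky, 0, 0] : Matrix (Fin 4) (Fin 4) ℂ).charpoly
        = X^2 * (X^2 + C (((kx:ℂ)^2 + (ky:ℂ)^2) * (c₀:ℂ)^2)) := by
      rw [Matrix.charpoly]
      have h : (!![0, 0, I * kx * c₀ ^ 2, 0;
            0, 0, 0, I * ky * c₀ ^ 2;
            I * kx, I * kx, 0, 0;
            I * ky, I * ky, 0, 0] : Matrix (Fin 4) (Fin 4) ℂ).charmatrix
          = !![X, 0, -C (I * kx * c₀ ^ 2), 0;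
               0, X, 0, -C (I * ky * c₀ ^ 2);
               -C (I * kx), -C (I * kx), X, 0;
               -C (I * ky), -C (I * ky), 0, X] := by
        ext i j
        fin_cases i <;> fin_cases j <;>
          simp [Matrix.charmatrix_apply, Matrix.one_apply, Matrix.vecHead, Matrix.vecTail]
      rw [h]
      simp [Matrix.det_succ_row_zero, Fin.sum_univ_succ, Fin.succAbove]
      ring_nf
      simp only [← map_pow, Complex.I_sq, map_neg, map_one]
      ring
    rw [hcp]
    have hqne : (X^2 + C (((kx:ℂ)^2 + (ky:ℂ)^2) * (c₀:ℂ)^2)) ≠ 0 := by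
      intro h
      apply hs
      have := congrArg (Polynomial.eval 0) h
      simpa using this
    have hq : (X^2 + C (((kx:ℂ)^2 + (ky:ℂ)^2) * (c₀:ℂ)^2)).rootMultiplicity 0 = 0 := by
      apply Polynomial.rootMultiplicity_eq_zero
      simp [Polynomial.IsRoot, hs]
    have hX : ((X : ℂ[X])^2).rootMultiplicity 0 = 2 := by
      simpa using Polynomial.rootMultiplicity_X_sub_C_pow (0 : ℂ) 2
    rw [Polynomial.rootMultiplicity_mul
      (mul_ne_zero (pow_ne_zero _ Polynomial.X_ne_zero) hqne), hq, hX]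
  · -- kernel
    ext v
    simp only [LinearMap.mem_ker, Matrix.mulVecLin_apply, Submodule.mem_span_singleton]
    constructor
    · intro h
      have h0 := congrFun h 0
      have h1 := congrFun h 1
      have h2 := congrFun h 2
      simp [Matrix.mulVec, dotProduct, Fin.sum_univ_four] at h0 h1 h2
      have hv2 : v 2 = 0 := by tauto
      have hv3 : v 3 = 0 := by tauto
      have hv01 : v 0 = -v 1 := by
        have : (I * kx) * (v 0 + v 1) = 0 := by ring_nf; ring_nf at h2; linear_combination h2
        rcases mul_eq_zero.mp this with h | h
        · exact absurd h (mul_ne_zero I_ne_zero hkx')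
        · linear_combination h
      refine ⟨v 1, ?_⟩
      funext i
      fin_cases i <;> simp [hv2, hv3, hv01]
    · rintro ⟨a, rfl⟩
      funext i
      fin_cases i <;> simp [Matrix.mulVec, dotProduct, Fin.sum_univ_four]
end

section
/- For the matrix M = [[0,0,ik_x c₀²,0],[0,0,0,ik_y c₀²],[ik_x,ik_x,0,0],[ik_y,ik_y,0,0]] with k_x, k_y real, the kernel of M² is spanned by the vectors (1,−1,0,0)ᵗ and (0,0,k_y,−k_x)ᵗ, provided (k_x, k_y) ≠ (0,0). -/
open Complex

theorem kernel_of_M_squared (c₀ kx ky : ℝ) (hc : 0 < c₀)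
    (hk : ¬(kx = 0 ∧ ky = 0))
    (M : Matrix (Fin 4) (Fin 4) ℂ)
    (hM : M = !![0, 0, I * kx * c₀ ^ 2, 0;
                 0, 0, 0, I * ky * c₀ ^ 2;
                 I * kx, I * kx, 0, 0;
                 I * ky, I * ky, 0, 0]) :
    LinearMap.ker (M * M).mulVecLin =
      Submodule.span ℂ {![1, -1, 0, 0], ![0, 0, (ky : ℂ), -(kx : ℂ)]} := by
  subst hM
  have hcne : (c₀ : ℂ) ≠ 0 := Complex.ofReal_ne_zero.mpr hc.ne'
  apply le_antisymm
  · intro v hv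
    simp only [LinearMap.mem_ker, Matrix.mulVecLin_apply] at hv
    have h0 := congrFun hv 0
    have h1 := congrFun hv 1
    have h2 := congrFun hv 2
    have h3 := congrFun hv 3
    simp [Matrix.mulVec, dotProduct, Fin.sum_univ_four, Matrix.mul_apply] at h0 h1 h2 h3
    have hsum : v 0 + v 1 = 0 := by
      rcases not_and_or.mp hk with h | h
      · have hne : (kx : ℂ) ≠ 0 := Complex.ofReal_ne_zero.mpr h
        have e : (Complex.I * kx * c₀ ^ 2 * (Complex.I * kx)) * (v 0 + v 1) = 0 := by
          linear_combination h0
        have f : (Complex.I * (kx : ℂ) * c₀ ^ 2 * (Complex.I * kx)) ≠ 0 :=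
          mul_ne_zero (mul_ne_zero (mul_ne_zero Complex.I_ne_zero hne)
            (pow_ne_zero _ hcne)) (mul_ne_zero Complex.I_ne_zero hne)
        exact (mul_eq_zero.mp e).resolve_left f
      · have hne : (ky : ℂ) ≠ 0 := Complex.ofReal_ne_zero.mpr h
        have e : (Complex.I * ky * c₀ ^ 2 * (Complex.I * ky)) * (v 0 + v 1) = 0 := by
          linear_combination h1
        have f : (Complex.I * (ky : ℂ) * c₀ ^ 2 * (Complex.I * ky)) ≠ 0 :=
          mul_ne_zero (mul_ne_zero (mul_ne_zero Complex.I_ne_zero hne)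
            (pow_ne_zero _ hcne)) (mul_ne_zero Complex.I_ne_zero hne)
        exact (mul_eq_zero.mp e).resolve_left f
    have horth : (kx : ℂ) * v 2 + (ky : ℂ) * v 3 = 0 := by
      rcases not_and_or.mp hk with h | h
      · have hne : (kx : ℂ) ≠ 0 := Complex.ofReal_ne_zero.mpr h
        have e : (Complex.I * Complex.I * kx * c₀ ^ 2) * ((kx : ℂ) * v 2 + ky * v 3) = 0 := by
          linear_combination h2
        have f : (Complex.I * Complex.I * (kx : ℂ) * c₀ ^ 2) ≠ 0 :=
          mul_ne_zero (mul_ne_zero (mul_ne_zero Complex.I_ne_zero Complex.I_ne_zero) hne)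
            (pow_ne_zero _ hcne)
        exact (mul_eq_zero.mp e).resolve_left f
      · have hne : (ky : ℂ) ≠ 0 := Complex.ofReal_ne_zero.mpr h
        have e : (Complex.I * Complex.I * ky * c₀ ^ 2) * ((kx : ℂ) * v 2 + ky * v 3) = 0 := by
          linear_combination h3
        have f : (Complex.I * Complex.I * (ky : ℂ) * c₀ ^ 2) ≠ 0 :=
          mul_ne_zero (mul_ne_zero (mul_ne_zero Complex.I_ne_zero Complex.I_ne_zero) hne)
            (pow_ne_zero _ hcne)
        exact (mul_eq_zero.mp e).resolve_left f
    rw [Submodule.mem_span_pair]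
    rcases not_and_or.mp hk with h | h
    · have hne : (kx : ℂ) ≠ 0 := Complex.ofReal_ne_zero.mpr h
      refine ⟨v 0, -(v 3) / kx, ?_⟩
      funext i
      fin_cases i
      · simp
      · simp; linear_combination -hsum
      · simp; field_simp; linear_combination -horth
      · simp; field_simp
    · have hne : (ky : ℂ) ≠ 0 := Complex.ofReal_ne_zero.mpr h
      refine ⟨v 0, v 2 / ky, ?_⟩
      funext i
      fin_cases i
      · simp
      · simp; linear_combination -hsum
      · simp; field_simp
      · simp; field_simp; linear_combination -horth
  · rw [Submodule.span_le]
    rintro x hx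
    simp only [Set.mem_insert_iff, Set.mem_singleton_iff] at hx
    rcases hx with rfl | rfl <;>
    · simp only [SetLike.mem_coe, LinearMap.mem_ker, Matrix.mulVecLin_apply]
      funext i
      fin_cases i <;>
        simp [Matrix.mulVec, dotProduct, Fin.sum_univ_four, Matrix.mul_apply] <;>
        ring
end

section
/- Let Ω⁺ be the layer {0 ≤ η ≤ δ}, σ* : [0,δ] → ℝ≥0 with σ*(η) > 0 for η > 0, and let k_y, ω > 0. For v̂(y) = v₀e^{−ik_y y} extended holomorphically, and v̂*(η) = v̂(η + (1/(iω))∫₀^η σ*(u)du), one has |v̂*(η)| = |v̂(η)| · exp(−(k_y/ω)∫₀^η σ*(u)du), hence |v̂*(η)| < |v̂(η)| for every η ∈ (0, δ]. -/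
/-!
The plane wave `v₀ e^{-i k z}` has modulus `‖v₀‖ e^{k Im z}`, so it only feels the imaginary part
of its argument. The complex stretching `η ↦ η + (1/(iω)) ∫₀^η σ` moves a real point by
`-(1/ω) ∫₀^η σ` in the imaginary direction, which multiplies the modulus by
`exp (-(k/ω) ∫₀^η σ)`; this factor is `< 1` because the integral of `σ > 0` is positive.
-/

open Complex

theorem norm_mul_exp_neg_I_mul (v₀ : ℂ) (k : ℝ) (z : ℂ) :
    ‖v₀ * exp (-I * k * z)‖ = ‖v₀‖ * Real.exp (k * z.im) := by
  rw [norm_mul, norm_exp]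
  congr 2
  simp

theorem im_ofReal_add_one_div_I_mul (x ω s : ℝ) :
    ((x : ℂ) + 1 / (I * ω) * s).im = -(s / ω) := by
  rw [one_div, mul_inv, inv_I, ← ofReal_inv]
  simp only [add_im, ofReal_im, mul_im, neg_re, neg_im, I_re, I_im, ofReal_re, mul_re]
  ring

theorem norm_planeWave_stretched (v₀ : ℂ) (k x ω s : ℝ) :
    ‖v₀ * exp (-I * k * ((x : ℂ) + 1 / (I * ω) * s))‖ =
      ‖v₀ * exp (-I * k * x)‖ * Real.exp (-(k / ω) * s) := by
  rw [norm_mul_exp_neg_I_mul, norm_mul_exp_neg_I_mul, im_ofReal_add_one_div_I_mul, ofReal_im,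
    mul_zero, Real.exp_zero, mul_one]
  congr 2
  ring

theorem exp_neg_div_mul_lt_one {k ω s : ℝ} (hk : 0 < k) (hω : 0 < ω) (hs : 0 < s) :
    Real.exp (-(k / ω) * s) < 1 := by
  rw [Real.exp_lt_one_iff, neg_mul, neg_lt_zero]
  positivity

theorem integral_pos_of_continuousOn_Icc {σ : ℝ → ℝ} {a b : ℝ} (hab : a < b)
    (hσc : ContinuousOn σ (Set.Icc a b)) (hσpos : ∀ x ∈ Set.Ioc a b, 0 < σ x) :
    0 < ∫ u in a..b, σ u := by
  refine intervalIntegral.intervalIntegral_pos_of_pos_on ?_ (fun x hx => hσpos x ⟨hx.1, hx.2.le⟩) hab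
  exact (hσc.mono (Set.uIcc_of_le hab.le).subset).intervalIntegrable

theorem pml_exponential_decay_general (δ ky ω : ℝ) (hky : 0 < ky) (hω : 0 < ω)
    (σ : ℝ → ℝ) (hσc : ContinuousOn σ (Set.Icc 0 δ))
    (hσpos : ∀ η ∈ Set.Ioc (0:ℝ) δ, 0 < σ η)
    (v₀ : ℂ) (hv₀ : v₀ ≠ 0)
    (vhat : ℂ → ℂ) (hvhat : ∀ z : ℂ, vhat z = v₀ * Complex.exp (-I * ky * z))
    (vstar : ℝ → ℂ)
    (hvstar : ∀ η : ℝ, vstar η =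
      vhat (η + (1 / (I * ω)) * ((∫ u in (0:ℝ)..η, σ u : ℝ) : ℂ))) :
    ∀ η ∈ Set.Ioc (0:ℝ) δ,
      ‖vstar η‖ =
        ‖vhat η‖ * Real.exp (-(ky / ω) * ∫ u in (0:ℝ)..η, σ u) ∧
      ‖vstar η‖ < ‖vhat η‖ := by
  rintro η ⟨hη0, hηδ⟩
  have hS : 0 < ∫ u in (0:ℝ)..η, σ u :=
    integral_pos_of_continuousOn_Icc hη0 (hσc.mono (Set.Icc_subset_Icc le_rfl hηδ))
      fun x hx => hσpos x ⟨hx.1, hx.2.trans hηδ⟩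
  have hnorm : ‖vstar η‖ = ‖vhat η‖ * Real.exp (-(ky / ω) * ∫ u in (0:ℝ)..η, σ u) := by
    rw [hvstar, hvhat, hvhat, norm_planeWave_stretched]
  have hvhat_pos : 0 < ‖vhat η‖ := by
    rw [hvhat]
    exact norm_pos_iff.mpr (mul_ne_zero hv₀ (exp_ne_zero _))
  refine ⟨hnorm, ?_⟩
  rw [hnorm]
  exact mul_lt_of_lt_one_right hvhat_pos (exp_neg_div_mul_lt_one hky hω hS)

theorem pml_exponential_decay (δ ky ω : ℝ) (hδ : 0 < δ) (hky : 0 < ky) (hω : 0 < ω)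
    (σ : ℝ → ℝ) (hσc : ContinuousOn σ (Set.Icc 0 δ))
    (hσ0 : ∀ η ∈ Set.Icc (0:ℝ) δ, 0 ≤ σ η)
    (hσpos : ∀ η ∈ Set.Ioc (0:ℝ) δ, 0 < σ η)
    (v₀ : ℂ) (hv₀ : v₀ ≠ 0)
    (vhat : ℂ → ℂ) (hvhat : ∀ z : ℂ, vhat z = v₀ * Complex.exp (-I * ky * z))
    (vstar : ℝ → ℂ)
    (hvstar : ∀ η : ℝ, vstar η =
      vhat (η + (1 / (I * ω)) * ((∫ u in (0:ℝ)..η, σ u : ℝ) : ℂ))) :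
    ∀ η ∈ Set.Ioc (0:ℝ) δ,
      ‖vstar η‖ =
        ‖vhat η‖ * Real.exp (-(ky / ω) * ∫ u in (0:ℝ)..η, σ u) ∧
      ‖vstar η‖ < ‖vhat η‖ :=
  pml_exponential_decay_general δ ky ω hky hω σ hσc hσpos v₀ hv₀ vhat hvhat vstar hvstar
end
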